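/- arXiv:1610.02194 — 3 statements merged into one kernel-verified Lean document; each statement's English description precedes it below -/
import Mathlib

section
/- With B and ψ the relativised collapsing hierarchy: if γ ≤ δ and the interval [γ, δ) is disjoint from B(γ), then B(γ) = B(δ). -/
open Ordinal

/-- The binary Veblen function: `veblen 0 β = ω ^ β`, and for `α > 0`,
`veblen α` enumerates the common fixed points of `veblen γ` for `γ < α`. -/
noncomputable def veblen : Ordinal → Ordinal → Ordinal :=
  WellFounded.fix Ordinal.lt_wf
    (fun α ih => if α = 0 then fun β => omega0 ^ β
      else derivFamily.{0} (familyOfBFamily α (fun ξ h => ih ξ h)))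

/-- The set of strongly critical ordinals. -/
def StronglyCritical (γ : Ordinal) : Prop := _root_.veblen γ 0 = γ

/-- `Gamma β` is the `β`-th strongly critical ordinal. -/
noncomputable def Gamma : Ordinal → Ordinal :=
  enumOrd {γ | StronglyCritical γ}

/-- The least uncountable cardinal (as an ordinal) greater than `θ`. -/
noncomputable def OmegaB (θ : Ordinal) : Ordinal :=
  sInf {o | θ < o ∧ o.card.ord = o ∧ Cardinal.aleph0 < o.card}

/-- Closure of `{0, Ω} ∪ {Γ_β : β ≤ θ}` under `+`, `veblen` and the
given partial collapsing function `f` on arguments below `α`. -/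
def closB (θ α : Ordinal) (f : ∀ ξ, ξ < α → Ordinal) : Set Ordinal :=
  ⋂₀ {S : Set Ordinal |
      0 ∈ S ∧ OmegaB θ ∈ S ∧ (∀ β ≤ θ, Gamma β ∈ S) ∧
      (∀ x ∈ S, ∀ y ∈ S, x + y ∈ S) ∧
      (∀ x ∈ S, ∀ y ∈ S, _root_.veblen x y ∈ S) ∧
      (∀ ξ (h : ξ < α), ξ ∈ S → f ξ h ∈ S)}

/-- The relativised collapsing function `ψ_θ`. -/
noncomputable def psiB (θ : Ordinal) : Ordinal → Ordinal :=
  WellFounded.fix Ordinal.lt_wf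
    (fun α ih => sInf {β | β ∉ closB θ α (fun ξ h => ih ξ h)})

/-- The relativised collapsing hierarchy `B_θ(α)`. -/
def BB (θ α : Ordinal) : Set Ordinal :=
  closB θ α (fun ξ _ => psiB θ ξ)

/-- The least strongly critical ordinal strictly above `δ`. -/
noncomputable def gammaSucc (δ : Ordinal) : Ordinal :=
  sInf {γ | δ < γ ∧ StronglyCritical γ}

/-! Enlarging the bound from `γ` to `δ` only adds closure under `ψ` at arguments in `[γ, δ)`;
when `B(γ)` has no such elements it is already closed under `ψ↾δ`, so the least such set `B(δ)`
lies inside it. -/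

/-- The closure conditions whose least solution is `closB θ α f`. -/
def IsClosB (θ α : Ordinal) (f : ∀ ξ, ξ < α → Ordinal) (S : Set Ordinal) : Prop :=
  0 ∈ S ∧ OmegaB θ ∈ S ∧ (∀ β ≤ θ, Gamma β ∈ S) ∧
    (∀ x ∈ S, ∀ y ∈ S, x + y ∈ S) ∧
    (∀ x ∈ S, ∀ y ∈ S, _root_.veblen x y ∈ S) ∧
    (∀ ξ (h : ξ < α), ξ ∈ S → f ξ h ∈ S)

section IsClosB

variable {θ α β : Ordinal} {S : Set Ordinal}

theorem closB_subset_of_isClosB {f : ∀ ξ, ξ < α → Ordinal} (hS : IsClosB θ α f S) :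
    closB θ α f ⊆ S :=
  Set.sInter_subset_of_mem hS

theorem isClosB_closB (f : ∀ ξ, ξ < α → Ordinal) : IsClosB θ α f (closB θ α f) :=
  ⟨fun _ hS => hS.1, fun _ hS => hS.2.1, fun β hβ _ hS => hS.2.2.1 β hβ,
    fun x hx y hy S hS => hS.2.2.2.1 x (hx S hS) y (hy S hS),
    fun x hx y hy S hS => hS.2.2.2.2.1 x (hx S hS) y (hy S hS),
    fun ξ hξ hξS S hS => hS.2.2.2.2.2 ξ hξ (hξS S hS)⟩

theorem IsClosB.of_le {F : Ordinal → Ordinal} (hαβ : α ≤ β)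
    (hS : IsClosB θ β (fun ξ _ => F ξ) S) : IsClosB θ α (fun ξ _ => F ξ) S :=
  let ⟨h0, hΩ, hΓ, hadd, hveb, hF⟩ := hS
  ⟨h0, hΩ, hΓ, hadd, hveb, fun ξ hξ => hF ξ (hξ.trans_le hαβ)⟩

theorem IsClosB.of_Ico_inter_eq_empty {F : Ordinal → Ordinal}
    (hS : IsClosB θ α (fun ξ _ => F ξ) S) (hgap : Set.Ico α β ∩ S = ∅) :
    IsClosB θ β (fun ξ _ => F ξ) S := by
  obtain ⟨h0, hΩ, hΓ, hadd, hveb, hF⟩ := hS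
  refine ⟨h0, hΩ, hΓ, hadd, hveb, fun ξ hξβ hξS => hF ξ ?_ hξS⟩
  by_contra hξα
  exact hgap.subset ⟨⟨not_lt.mp hξα, hξβ⟩, hξS⟩

theorem closB_mono {F : Ordinal → Ordinal} (hαβ : α ≤ β) :
    closB θ α (fun ξ _ => F ξ) ⊆ closB θ β (fun ξ _ => F ξ) :=
  fun _ hx S hS => hx S (IsClosB.of_le hαβ hS)

end IsClosB

theorem stmt8 (θ γ δ : Ordinal) (h : γ ≤ δ)
    (hdisj : Set.Ico γ δ ∩ BB θ γ = ∅) : BB θ γ = BB θ δ :=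
  (closB_mono h).antisymm <|
    closB_subset_of_isClosB ((isClosB_closB _).of_Ico_inter_eq_empty hdisj)
end

section
/- With B and ψ the relativised collapsing hierarchy: for every ordinal γ, B(γ) ∩ Ω = ψ(γ), i.e., the set of ordinals in B(γ) that are below Ω is exactly the set of ordinals below ψ(γ). -/
open Ordinal

/-!
The `veblen` above is Mathlib's `Ordinal.veblen`, so `Gamma` is `Ordinal.gamma`.

`B(γ)` is contained in the union of countably many stages, each of cardinality at most
`|θ| + ℵ₀ < |Ω|`; hence some ordinal below `Ω` is missing from `B(γ)` and `ψ(γ) < Ω`.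
Conversely `B(γ) ∩ Ω` is downward closed: every nonzero ordinal that is not strongly critical is
`a + b` or `φ a b` with `a, b` smaller, so it suffices that every strongly critical ordinal below a
generator `x < Ω` of `B(γ)` lies in `B(γ)`. For `x = Γ_β` it is some `Γ_β'` with `β' < β`; for
`x = φ u v` it is at most `u` or `v`, since strongly critical ordinals are closed under `φ`; and
below `x = ψ(ξ)` everything lies in `B(ξ) ⊆ B(γ)`. So an element `x ≥ ψ(γ)` of `B(γ) ∩ Ω` would put
`ψ(γ)` into `B(γ)`.
-/

universe u

theorem Ordinal.derivFamily_congr {ι ι' : Type*} [Small.{u} ι] [Small.{u} ι']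
    {f : ι → Ordinal.{u} → Ordinal} {g : ι' → Ordinal → Ordinal}
    (hf : ∀ i, Order.IsNormal (f i)) (hg : ∀ j, Order.IsNormal (g j))
    (h : ∀ a, (∀ i, f i a = a) ↔ ∀ j, g j a = a) : derivFamily f = derivFamily g := by
  rw [derivFamily_eq_enumOrd hf, derivFamily_eq_enumOrd hg]
  congr 1
  ext a
  simpa [Function.fixedPoints, Function.IsFixedPt] using h a

theorem veblen_eq_ordinalVeblen : _root_.veblen = Ordinal.veblen := by
  funext α
  induction α using WellFoundedLT.induction with
  | _ α ih =>
  rw [_root_.veblen, WellFounded.fix_eq]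
  split_ifs with hα
  · rw [hα, Ordinal.veblen_zero]
  · rw [Ordinal.veblen_of_ne_zero hα]
    change derivFamily (familyOfBFamily α fun ξ _ => _root_.veblen ξ) = _
    have hF (i : α.ToType) : familyOfBFamily α (fun ξ _ => _root_.veblen ξ) i =
        Ordinal.veblen (typein (α := α.ToType) (· < ·) i) :=
      ih _ (typein_lt_self i)
    refine derivFamily_congr (f := familyOfBFamily α fun ξ _ => _root_.veblen ξ)
      (fun i => ?_) (fun _ => Ordinal.isNormal_veblen _) fun a => ⟨?_, ?_⟩
    · exact hF i ▸ Ordinal.isNormal_veblen _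
    · rintro H ⟨ξ, hξ⟩
      obtain ⟨i, rfl⟩ := typein_surj (α := α.ToType) (· < ·) (hξ.trans_eq (type_toType α).symm)
      exact hF i ▸ H i
    · intro H i
      exact (hF i).symm ▸ H ⟨_, typein_lt_self i⟩

theorem stronglyCritical_iff {c : Ordinal} : StronglyCritical c ↔ Ordinal.veblen c 0 = c := by
  rw [StronglyCritical, veblen_eq_ordinalVeblen]

theorem Gamma_eq_gamma : Gamma = gamma := by
  have : {c | StronglyCritical c} = Set.range gamma := by
    ext c
    exact stronglyCritical_iff.trans mem_range_gamma.symm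
  rw [Gamma, this, enumOrd_range strictMono_gamma]

theorem stronglyCritical_iff_mem_range_Gamma {c : Ordinal} :
    StronglyCritical c ↔ c ∈ Set.range Gamma := by
  rw [stronglyCritical_iff, Gamma_eq_gamma, mem_range_gamma]

theorem Gamma_lt_Gamma {a b : Ordinal} : Gamma a < Gamma b ↔ a < b := by
  rw [Gamma_eq_gamma, gamma_lt_gamma]

theorem StronglyCritical.veblen_lt {a b c : Ordinal} (hc : StronglyCritical c) (ha : a < c)
    (hb : b < c) : Ordinal.veblen a b < c := by
  rw [stronglyCritical_iff] at hc
  calc Ordinal.veblen a b < Ordinal.veblen a c := veblen_lt_veblen_iff_right.2 hb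
    _ = c := by rw [← hc, veblen_veblen_of_lt (hc.symm ▸ ha)]

theorem exists_eq_add_or_eq_veblen_of_not_stronglyCritical {y : Ordinal} (hy : y ≠ 0)
    (hsc : ¬ StronglyCritical y) : ∃ a < y, ∃ b < y, y = a + b ∨ y = Ordinal.veblen a b := by
  by_cases hp : IsPrincipal (· + ·) y
  · obtain ⟨x, rfl⟩ := (isPrincipal_add_iff_zero_or_omega0_opow.1 hp).resolve_left hy
    refine ⟨invVeblen₁ x, ?_, invVeblen₂ x, invVeblen₂_lt x,
      Or.inr (veblen_invVeblen₁_invVeblen₂ x).symm⟩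
    refine ((invVeblen₁_le x).trans (right_le_opow x one_lt_omega0)).lt_of_ne fun h => hsc ?_
    refine stronglyCritical_iff.2 (le_antisymm ?_ (left_le_veblen _ _))
    calc Ordinal.veblen (ω ^ x) 0 ≤ Ordinal.veblen (ω ^ x) (invVeblen₂ x) :=
          veblen_le_veblen_iff_right.2 zero_le
      _ = ω ^ x := by rw [← h, veblen_invVeblen₁_invVeblen₂, h]
  · simp only [IsPrincipal, not_forall, not_lt] at hp
    obtain ⟨a, b, ha, hb, hab⟩ := hp
    exact ⟨a, ha, y - a, (Ordinal.sub_le.2 hab).trans_lt hb,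
      Or.inl (Ordinal.add_sub_cancel_of_le ha.le).symm⟩

theorem mem_of_forall_stronglyCritical_le {S : Set Ordinal} (zero_mem : 0 ∈ S)
    (add_mem : ∀ a ∈ S, ∀ b ∈ S, a + b ∈ S)
    (veblen_mem : ∀ a ∈ S, ∀ b ∈ S, Ordinal.veblen a b ∈ S) {y : Ordinal}
    (hy : ∀ c ≤ y, StronglyCritical c → c ∈ S) : y ∈ S := by
  induction y using WellFoundedLT.induction with
  | _ y ih =>
  rcases eq_or_ne y 0 with rfl | hy0
  · exact zero_mem
  by_cases hsc : StronglyCritical y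
  · exact hy y le_rfl hsc
  have hS : ∀ z < y, z ∈ S := fun z hz => ih z hz fun c hc => hy c (hc.trans hz.le)
  obtain ⟨a, ha, b, hb, rfl | rfl⟩ := exists_eq_add_or_eq_veblen_of_not_stronglyCritical hy0 hsc
  · exact add_mem a (hS a ha) b (hS b hb)
  · exact veblen_mem a (hS a ha) b (hS b hb)

theorem OmegaB_spec (θ : Ordinal) :
    θ < OmegaB θ ∧ (OmegaB θ).card.ord = OmegaB θ ∧ Cardinal.aleph0 < (OmegaB θ).card := by
  let κ := Order.succ (max θ.card Cardinal.aleph0)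
  refine csInf_mem (s := {o | θ < o ∧ o.card.ord = o ∧ Cardinal.aleph0 < o.card})
    ⟨κ.ord, ?_, by rw [Cardinal.card_ord], ?_⟩
  · rw [Cardinal.lt_ord]
    exact (le_max_left _ _).trans_lt (Order.lt_succ _)
  · rw [Cardinal.card_ord]
    exact (le_max_right _ _).trans_lt (Order.lt_succ _)

theorem lt_OmegaB (θ : Ordinal) : θ < OmegaB θ := (OmegaB_spec θ).1

theorem card_lt_card_OmegaB {θ o : Ordinal} (h : o < OmegaB θ) : o.card < (OmegaB θ).card := by
  rwa [← Cardinal.lt_ord, (OmegaB_spec θ).2.1]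

theorem aleph0_lt_card_OmegaB (θ : Ordinal) : Cardinal.aleph0 < (OmegaB θ).card :=
  (OmegaB_spec θ).2.2

section closB

variable {θ α : Ordinal} {f : ∀ ξ, ξ < α → Ordinal}

theorem zero_mem_closB : 0 ∈ closB θ α f := fun _ hS => hS.1

theorem OmegaB_mem_closB : OmegaB θ ∈ closB θ α f := fun _ hS => hS.2.1

theorem Gamma_mem_closB {β : Ordinal} (hβ : β ≤ θ) : Gamma β ∈ closB θ α f :=
  fun _ hS => hS.2.2.1 β hβ

theorem add_mem_closB {x y : Ordinal} (hx : x ∈ closB θ α f) (hy : y ∈ closB θ α f) :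
    x + y ∈ closB θ α f :=
  fun S hS => hS.2.2.2.1 x (hx S hS) y (hy S hS)

theorem veblen_mem_closB {x y : Ordinal} (hx : x ∈ closB θ α f) (hy : y ∈ closB θ α f) :
    Ordinal.veblen x y ∈ closB θ α f := by
  rw [← veblen_eq_ordinalVeblen]
  exact fun S hS => hS.2.2.2.2.1 x (hx S hS) y (hy S hS)

theorem apply_mem_closB {ξ : Ordinal} (hξ : ξ < α) (hξS : ξ ∈ closB θ α f) :
    f ξ hξ ∈ closB θ α f :=
  fun S hS => hS.2.2.2.2.2 ξ hξ (hξS S hS)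

@[elab_as_elim]
theorem closB_induction {P : ∀ x, x ∈ closB θ α f → Prop} (zero : P 0 zero_mem_closB)
    (omega : P (OmegaB θ) OmegaB_mem_closB)
    (gamma : ∀ β (hβ : β ≤ θ), P (Gamma β) (Gamma_mem_closB hβ))
    (add : ∀ x hx y hy, P x hx → P y hy → P (x + y) (add_mem_closB hx hy))
    (veblen : ∀ x hx y hy, P x hx → P y hy → P (Ordinal.veblen x y) (veblen_mem_closB hx hy))
    (apply : ∀ ξ (hξ : ξ < α) hξS, P ξ hξS → P (f ξ hξ) (apply_mem_closB hξ hξS))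
    {x : Ordinal} (hx : x ∈ closB θ α f) : P x hx := by
  suffices h : x ∈ {x | ∃ hx, P x hx} from h.elim fun _ hP => hP
  refine Set.sInter_subset_of_mem ?_ hx
  refine ⟨⟨_, zero⟩, ⟨_, omega⟩, fun β hβ => ⟨_, gamma β hβ⟩,
    fun x ⟨hx, hPx⟩ y ⟨hy, hPy⟩ => ⟨_, add x hx y hy hPx hPy⟩, fun x ⟨hx, hPx⟩ y ⟨hy, hPy⟩ => ?_,
    fun ξ hξ ⟨hξS, hPξ⟩ => ⟨_, apply ξ hξ hξS hPξ⟩⟩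
  rw [veblen_eq_ordinalVeblen]
  exact ⟨_, veblen x hx y hy hPx hPy⟩

end closB

theorem BB_mono (θ : Ordinal) : Monotone (BB θ) := fun _ _ h =>
  Set.sInter_subset_sInter fun _ ⟨h0, hΩ, hΓ, hadd, hveb, hψ⟩ =>
    ⟨h0, hΩ, hΓ, hadd, hveb, fun ξ hξ => hψ ξ (hξ.trans_le h)⟩

theorem psiB_eq_sInf (θ α : Ordinal) : psiB θ α = sInf (BB θ α)ᶜ := by
  rw [psiB, WellFounded.fix_eq]
  rfl

theorem mem_BB_of_lt_psiB {θ α x : Ordinal} (h : x < psiB θ α) : x ∈ BB θ α := by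
  rw [psiB_eq_sInf] at h
  simpa using notMem_of_lt_csInf' h

/-- Applying `psiB` to all earlier elements, not only to those below `α`, makes the stages
exhaust `BB θ α` for every `α` at once. -/
def BBStage (θ : Ordinal) : ℕ → Set Ordinal
  | 0 => {0, OmegaB θ} ∪ Gamma '' Set.Iic θ
  | n + 1 =>
    let S := BBStage θ n
    S ∪ Set.image2 (· + ·) S S ∪ Set.image2 Ordinal.veblen S S ∪ psiB θ '' S

theorem monotone_BBStage (θ : Ordinal) : Monotone (BBStage θ) :=
  monotone_nat_of_le_succ fun _ =>
    (Set.subset_union_left.trans Set.subset_union_left).trans Set.subset_union_left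

theorem BB_subset_iUnion_BBStage (θ α : Ordinal) : BB θ α ⊆ ⋃ n, BBStage θ n := by
  intro x hx
  induction hx using closB_induction with
  | zero => exact Set.mem_iUnion.2 ⟨0, .inl (.inl rfl)⟩
  | omega => exact Set.mem_iUnion.2 ⟨0, .inl (.inr rfl)⟩
  | gamma β hβ => exact Set.mem_iUnion.2 ⟨0, .inr ⟨β, hβ, rfl⟩⟩
  | add x _ y _ hx hy =>
    obtain ⟨⟨m, hm⟩, ⟨n, hn⟩⟩ := And.intro (Set.mem_iUnion.1 hx) (Set.mem_iUnion.1 hy)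
    exact Set.mem_iUnion.2 ⟨max m n + 1, .inl (.inl (.inr (Set.mem_image2_of_mem
      (monotone_BBStage θ (le_max_left m n) hm) (monotone_BBStage θ (le_max_right m n) hn))))⟩
  | veblen x _ y _ hx hy =>
    obtain ⟨⟨m, hm⟩, ⟨n, hn⟩⟩ := And.intro (Set.mem_iUnion.1 hx) (Set.mem_iUnion.1 hy)
    exact Set.mem_iUnion.2 ⟨max m n + 1, .inl (.inr (Set.mem_image2_of_mem
      (monotone_BBStage θ (le_max_left m n) hm) (monotone_BBStage θ (le_max_right m n) hn)))⟩
  | apply ξ _ _ hξ =>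
    obtain ⟨n, hn⟩ := Set.mem_iUnion.1 hξ
    exact Set.mem_iUnion.2 ⟨n + 1, .inr ⟨ξ, hn, rfl⟩⟩

theorem mk_BBStage_le (θ : Ordinal) (n : ℕ) :
    Cardinal.mk (BBStage θ n) ≤ Cardinal.lift.{1} θ.card + Cardinal.aleph0 := by
  set κ := Cardinal.lift.{1} θ.card + Cardinal.aleph0
  have hκ : Cardinal.aleph0 ≤ κ := le_add_self
  have union_le {S T : Set Ordinal} (hS : Cardinal.mk S ≤ κ) (hT : Cardinal.mk T ≤ κ) :
      Cardinal.mk ↑(S ∪ T) ≤ κ :=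
    (Cardinal.mk_union_le S T).trans (Cardinal.add_le_of_le hκ hS hT)
  induction n with
  | zero =>
    refine union_le ((Set.toFinite _).lt_aleph0.le.trans hκ) (Cardinal.mk_image_le.trans ?_)
    rw [← Set.Iio_insert]
    refine Cardinal.mk_insert_le.trans ?_
    rw [Cardinal.mk_Iio_ordinal]
    exact add_le_add_right Cardinal.one_le_aleph0 _
  | succ n ih =>
    have image2_le {g : Ordinal → Ordinal → Ordinal} :
        Cardinal.mk (Set.image2 g (BBStage θ n) (BBStage θ n)) ≤ κ :=
      Cardinal.mk_image2_le.trans (Cardinal.mul_le_of_le hκ ih ih)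
    exact union_le (union_le (union_le ih image2_le) image2_le) (Cardinal.mk_image_le.trans ih)

theorem mk_iUnion_BBStage_le (θ : Ordinal) :
    Cardinal.mk (⋃ n, BBStage θ n) ≤ Cardinal.lift.{1} θ.card + Cardinal.aleph0 := by
  have hκ : Cardinal.aleph0 ≤ Cardinal.lift.{1} θ.card + Cardinal.aleph0 := le_add_self
  have h := Cardinal.mk_iUnion_le_lift (BBStage θ)
  simp only [Cardinal.lift_uzero, Cardinal.mk_nat, Cardinal.lift_aleph0] at h
  exact h.trans (Cardinal.mul_le_of_le hκ hκ (ciSup_le' (mk_BBStage_le θ)))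

theorem exists_lt_OmegaB_notMem_BB (θ α : Ordinal) : ∃ β < OmegaB θ, β ∉ BB θ α := by
  by_contra! h
  have hsub : Set.Iio (OmegaB θ) ⊆ ⋃ n, BBStage θ n :=
    fun β hβ => BB_subset_iUnion_BBStage θ α (h β hβ)
  have hle := (Cardinal.mk_le_mk_of_subset hsub).trans (mk_iUnion_BBStage_le θ)
  rw [Cardinal.mk_Iio_ordinal, ← Cardinal.lift_aleph0.{1, 0}, ← Cardinal.lift_add,
    Cardinal.lift_le] at hle
  exact hle.not_gt (Cardinal.add_lt_of_lt (aleph0_lt_card_OmegaB θ).le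
    (card_lt_card_OmegaB (lt_OmegaB θ)) (aleph0_lt_card_OmegaB θ))

theorem psiB_notMem_BB (θ α : Ordinal) : psiB θ α ∉ BB θ α := by
  obtain ⟨β, -, hβ⟩ := exists_lt_OmegaB_notMem_BB θ α
  rw [psiB_eq_sInf]
  exact csInf_mem (s := (BB θ α)ᶜ) ⟨β, hβ⟩

theorem psiB_lt_OmegaB (θ α : Ordinal) : psiB θ α < OmegaB θ := by
  obtain ⟨β, hβΩ, hβ⟩ := exists_lt_OmegaB_notMem_BB θ α
  rw [psiB_eq_sInf]
  exact (csInf_le' hβ).trans_lt hβΩ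

theorem mem_BB_of_stronglyCritical_le {θ γ y : Ordinal}
    (h : ∀ c ≤ y, StronglyCritical c → c ∈ BB θ γ) : y ∈ BB θ γ :=
  mem_of_forall_stronglyCritical_le zero_mem_closB (fun _ ha _ hb => add_mem_closB ha hb)
    (fun _ ha _ hb => veblen_mem_closB ha hb) h

theorem mem_BB_of_lt {θ γ x y : Ordinal} (hx : x ∈ BB θ γ) (hxΩ : x < OmegaB θ) (hyx : y < x) :
    y ∈ BB θ γ := by
  induction hx using closB_induction generalizing y with
  | zero => exact (not_lt_zero hyx).elim
  | omega => exact (lt_irrefl _ hxΩ).elim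
  | gamma β hβ =>
    refine mem_BB_of_stronglyCritical_le fun c hcy hc => ?_
    obtain ⟨β', rfl⟩ := stronglyCritical_iff_mem_range_Gamma.1 hc
    exact Gamma_mem_closB ((Gamma_lt_Gamma.1 (hcy.trans_lt hyx)).le.trans hβ)
  | add u hu v hv ihu ihv =>
    have huΩ : u < OmegaB θ := le_self_add.trans_lt hxΩ
    have hvΩ : v < OmegaB θ := le_add_self.trans_lt hxΩ
    rcases lt_or_ge y u with hyu | huy
    · exact ihu huΩ hyu
    rw [← Ordinal.add_sub_cancel_of_le huy] at hyx ⊢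
    exact add_mem_closB hu (ihv hvΩ ((add_lt_add_iff_left u).1 hyx))
  | veblen u hu v hv ihu ihv =>
    have mem_of_le {w : Ordinal} (hw : w ∈ BB θ γ) (ih : ∀ {z}, z < w → z ∈ BB θ γ) {c : Ordinal}
        (hc : c ≤ w) : c ∈ BB θ γ :=
      hc.eq_or_lt.elim (· ▸ hw) ih
    refine mem_BB_of_stronglyCritical_le fun c hcy hc => ?_
    by_cases hcu : c ≤ u
    · exact mem_of_le hu (ihu ((left_le_veblen u v).trans_lt hxΩ)) hcu
    by_cases hcv : c ≤ v
    · exact mem_of_le hv (ihv ((right_le_veblen u v).trans_lt hxΩ)) hcv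
    exact absurd (hcy.trans_lt hyx) (hc.veblen_lt (not_le.1 hcu) (not_le.1 hcv)).not_gt
  | apply ξ hξ _ _ => exact BB_mono θ hξ.le (mem_BB_of_lt_psiB hyx)

theorem stmt11 (θ γ : Ordinal) :
    BB θ γ ∩ Set.Iio (OmegaB θ) = Set.Iio (psiB θ γ) := by
  ext x
  refine ⟨fun ⟨hxB, hxΩ⟩ => Set.mem_Iio.2 <| lt_of_not_ge fun hx => psiB_notMem_BB θ γ ?_,
    fun hx => ⟨mem_BB_of_lt_psiB hx, hx.trans (psiB_lt_OmegaB θ γ)⟩⟩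
  exact hx.eq_or_lt.elim (· ▸ hxB) (mem_BB_of_lt hxB hxΩ)
end

section
/- With B and ψ the relativised collapsing hierarchy: if γ ∈ B(γ) and δ ∈ B(δ), then γ < δ if and only if ψ(γ) < ψ(δ). -/
/-! `ψ(α)` is the least ordinal outside `B(α)`; it exists because `B(α)` is small, being the union
of countably many rounds of closure of a small set. For `γ < δ` with `γ ∈ B(γ)` we get
`ψ(γ) ∈ B(δ) ∌ ψ(δ)`, which together with monotonicity of `ψ` gives `ψ(γ) < ψ(δ)`; the converse
is monotonicity alone. -/

open Ordinal

section Iterate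

universe u

variable {α : Type*} {f : Set α → Set α}

lemma monotone_iterate_empty (hf : ∀ s, s ⊆ f s) : Monotone fun n => f^[n] ∅ :=
  monotone_nat_of_le_succ fun n => by
    rw [Function.iterate_succ_apply']
    exact hf _

lemma small_iterate_empty (hf : ∀ s : Set α, Small.{u} s → Small.{u} (f s)) (n : ℕ) :
    Small.{u} (f^[n] ∅) := by
  induction n with
  | zero => exact small_subset (Set.empty_subset (∅ : Set α))
  | succ n ih =>
    rw [Function.iterate_succ_apply']
    exact hf _ ih

end Iterate

namespace BB

variable (θ : Ordinal)

lemma psiB_eq_sInf_compl (α : Ordinal) : psiB θ α = sInf (BB θ α)ᶜ := by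
  rw [psiB, WellFounded.fix_eq]
  rfl

lemma mono {α α' : Ordinal} (h : α ≤ α') : BB θ α ⊆ BB θ α' :=
  fun _ hx S ⟨h0, hΩ, hΓ, hadd, hφ, hψ⟩ =>
    hx S ⟨h0, hΩ, hΓ, hadd, hφ, fun ξ hξ => hψ ξ (hξ.trans_le h)⟩

lemma psiB_mem {α ξ : Ordinal} (hξ : ξ < α) (hx : ξ ∈ BB θ α) : psiB θ ξ ∈ BB θ α :=
  fun S hS => hS.2.2.2.2.2 ξ hξ (hx S hS)

def step (α : Ordinal) (s : Set Ordinal) : Set Ordinal :=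
  s ∪ ({0, OmegaB θ} ∪ Gamma '' Set.Iic θ) ∪ Set.image2 (· + ·) s s ∪
    Set.image2 _root_.veblen s s ∪ psiB θ '' (s ∩ Set.Iio α)

lemma subset_step (α : Ordinal) (s : Set Ordinal) : s ⊆ step θ α s :=
  fun _ hx => Or.inl (Or.inl (Or.inl (Or.inl hx)))

lemma small_step (α : Ordinal) (s : Set Ordinal) (hs : Small.{0} s) : Small.{0} (step θ α s) :=
  have : Small.{0} (s ∩ Set.Iio α : Set Ordinal) := small_subset Set.inter_subset_left
  inferInstanceAs (Small.{0} (_ ∪ _ : Set Ordinal))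

lemma subset_iUnion_iterate_step (α : Ordinal) : BB θ α ⊆ ⋃ n, (step θ α)^[n] ∅ := by
  set U := ⋃ n, (step θ α)^[n] ∅
  have hmono := monotone_iterate_empty (subset_step θ α)
  have mem_U_of_step {n : ℕ} {x : Ordinal} (hx : x ∈ step θ α ((step θ α)^[n] ∅)) : x ∈ U :=
    Set.mem_iUnion.2 ⟨n + 1, by rwa [Function.iterate_succ_apply']⟩
  have common_stage {x y : Ordinal} (hx : x ∈ U) (hy : y ∈ U) :
      ∃ n, x ∈ (step θ α)^[n] ∅ ∧ y ∈ (step θ α)^[n] ∅ := by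
    obtain ⟨m, hm⟩ := Set.mem_iUnion.1 hx
    obtain ⟨n, hn⟩ := Set.mem_iUnion.1 hy
    exact ⟨max m n, hmono (le_max_left m n) hm, hmono (le_max_right m n) hn⟩
  intro x hx
  refine hx U ⟨?_, ?_, ?_, ?_, ?_, ?_⟩
  · exact mem_U_of_step (n := 0) (Or.inl (Or.inl (Or.inl (Or.inr (Or.inl (.inl rfl))))))
  · exact mem_U_of_step (n := 0) (Or.inl (Or.inl (Or.inl (Or.inr (Or.inl (.inr rfl))))))
  · exact fun β hβ =>
      mem_U_of_step (n := 0) (Or.inl (Or.inl (Or.inl (Or.inr (Or.inr ⟨β, hβ, rfl⟩)))))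
  · intro a ha b hb
    obtain ⟨n, ha, hb⟩ := common_stage ha hb
    exact mem_U_of_step (Or.inl (Or.inl (Or.inr ⟨a, ha, b, hb, rfl⟩)))
  · intro a ha b hb
    obtain ⟨n, ha, hb⟩ := common_stage ha hb
    exact mem_U_of_step (Or.inl (Or.inr ⟨a, ha, b, hb, rfl⟩))
  · intro ξ hξ hξU
    obtain ⟨n, hn⟩ := Set.mem_iUnion.1 hξU
    exact mem_U_of_step (Or.inr ⟨ξ, ⟨hn, hξ⟩, rfl⟩)

lemma small (α : Ordinal) : Small.{0} (BB θ α) :=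
  have := small_iterate_empty (small_step θ α)
  small_subset (subset_iUnion_iterate_step θ α)

lemma psiB_notMem (α : Ordinal) : psiB θ α ∉ BB θ α := by
  have : Small.{0} (BB θ α) := small θ α
  have hne : (BB θ α)ᶜ.Nonempty := by
    obtain ⟨b, hb⟩ := Ordinal.bddAbove_of_small (s := BB θ α)
    exact ⟨Order.succ b, fun h => (Order.lt_succ b).not_ge (hb h)⟩
  rw [psiB_eq_sInf_compl]
  exact csInf_mem hne

lemma psiB_mono : Monotone (psiB θ) := by
  intro α α' h
  rw [psiB_eq_sInf_compl, psiB_eq_sInf_compl]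
  exact csInf_le_csInf' ⟨_, psiB_notMem θ α'⟩ (Set.compl_subset_compl.2 (mono θ h))

lemma psiB_lt_psiB {γ δ : Ordinal} (hγ : γ ∈ BB θ γ) (h : γ < δ) : psiB θ γ < psiB θ δ :=
  have hψγ : psiB θ γ ∈ BB θ δ := psiB_mem θ h (mono θ h.le hγ)
  (psiB_mono θ h.le).lt_of_ne fun he => psiB_notMem θ δ (he ▸ hψγ)

end BB

theorem stmt15_general (θ γ δ : Ordinal) (hγ : γ ∈ BB θ γ) :
    γ < δ ↔ psiB θ γ < psiB θ δ :=
  ⟨BB.psiB_lt_psiB θ hγ, fun h => lt_of_not_ge fun hle => (BB.psiB_mono θ hle).not_gt h⟩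

theorem stmt15 (θ γ δ : Ordinal) (hγ : γ ∈ BB θ γ) (hδ : δ ∈ BB θ δ) :
    γ < δ ↔ psiB θ γ < psiB θ δ :=
  stmt15_general θ γ δ hγ
end
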